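/- arXiv:1901.03625 — 2 statements merged into one kernel-verified Lean document; each statement's English description precedes it below -/
import Mathlib

section
/- Assume in addition that for each t ≥ 1 there exists z^t ∈ 𝒳^t such that θ ↦ μ^t_θ(z^t) is not w-almost-everywhere equal to a constant. Then in the correlation model the parameters θ⁽¹⁾ and θ⁽²⁾ are independent (their joint law is the product of their marginals) if and only if t = 0; in particular f⁰ ≡ 1 and p⁰(θ, θ') = w(θ) w(θ'). -/
open MeasureTheory Real Filter

noncomputable section

/-- Base-2 Shannon entropy of a finitely supported mass function. -/
def H2 {S : Type*} [Fintype S] (p : S → ℝ) : ℝ :=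
  ∑ s, -(p s * Real.logb 2 (p s))

/-- The correlation model of the paper: a finite alphabet `𝒳`, a measurable parameter set
`Θ ⊆ ℝ^d`, a parametric family of pmfs `μ t θ` on strings of length `t`, and a prior
probability density `w` on `Θ`. -/
structure CorrModel (d : ℕ) (𝒳 : Type) [Fintype 𝒳] where
  Θ : Set (EuclideanSpace ℝ (Fin d))
  hΘ : MeasurableSet Θ
  μ : (t : ℕ) → EuclideanSpace ℝ (Fin d) → (Fin t → 𝒳) → ℝ
  w : EuclideanSpace ℝ (Fin d) → ℝ
  hμpos : ∀ t θ z, 0 < μ t θ z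
  hμsum : ∀ t θ, ∑ z : Fin t → 𝒳, μ t θ z = 1
  hμmeas : ∀ t (z : Fin t → 𝒳), Measurable fun θ => μ t θ z
  hw0 : ∀ θ, 0 ≤ w θ
  hwmeas : Measurable w
  hwint : IntegrableOn w Θ
  hw1 : ∫ θ in Θ, w θ = 1

namespace CorrModel

variable {d : ℕ} {𝒳 : Type} [Fintype 𝒳] (M : CorrModel d 𝒳)

/-- The posterior density of the parameter given the observation `z^t`:
`p(θ | z^t) = μ^t_θ(z^t) w(θ) / ∫ μ^t_φ(z^t) w(φ) dφ`. -/
def post (t : ℕ) (z : Fin t → 𝒳) (θ : EuclideanSpace ℝ (Fin d)) : ℝ :=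
  M.μ t θ z * M.w θ / ∫ φ in M.Θ, M.μ t φ z * M.w φ

/-- `f^t(θ, θ') = Σ_z μ^t_θ(z) μ^t_{θ'}(z) / ∫ μ^t_φ(z) w(φ) dφ`. -/
def f (t : ℕ) (θ θ' : EuclideanSpace ℝ (Fin d)) : ℝ :=
  ∑ z : Fin t → 𝒳, M.μ t θ z * M.μ t θ' z / ∫ φ in M.Θ, M.μ t φ z * M.w φ

end CorrModel


namespace CorrModel

variable {d : ℕ} {𝒳 : Type} [Fintype 𝒳] (M : CorrModel d 𝒳)

/-- The prior probability measure on the parameter set, with density `w` w.r.t. Lebesgue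
measure restricted to `Θ`. -/
def wMeasure : Measure (EuclideanSpace ℝ (Fin d)) :=
  (volume.restrict M.Θ).withDensity fun θ => ENNReal.ofReal (M.w θ)

/-- The joint law of `(θ⁽¹⁾, θ⁽²⁾)` in the correlation model with hyperparameter `t`,
with density `p^t(θ, θ') = w(θ) w(θ') f^t(θ, θ')` w.r.t. Lebesgue measure on `Θ × Θ`. -/
def jointMeasure (t : ℕ) : Measure (EuclideanSpace ℝ (Fin d) × EuclideanSpace ℝ (Fin d)) :=
  ((volume.restrict M.Θ).prod (volume.restrict M.Θ)).withDensity
    fun p => ENNReal.ofReal (M.w p.1 * M.w p.2 * M.f t p.1 p.2)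

end CorrModel

/-!
Both marginals of the joint law are the prior `W`, and the joint law has density
`f^t = ∑_z μ_z ⊗ μ_z / m_z` with respect to `W ⊗ W`, where `m_z = ∫ μ_z dW`; so independence
means `f^t = 1` a.e. With `u_z = μ_z - m_z` one has `f^t - 1 = ∑_z u_z ⊗ u_z / m_z`, and testing
`f^t - 1` against `u_z ⊗ u_z` gives `0 = ∑_z' (∫ u_z u_z' dW)² / m_z' ≥ (∫ u_z² dW)² / m_z`,
so `μ_z` is `W`-a.e. constant. For `t = 0` there is only the empty string, and `f⁰ ≡ 1`.
-/

section Marginals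

open scoped ENNReal

variable {α β : Type*} [MeasurableSpace α] [MeasurableSpace β] {μ : Measure α} {ν : Measure β}
  {D : α × β → ℝ≥0∞}

lemma map_fst_withDensity_prod [SFinite μ] [SFinite ν] (hD : Measurable D)
    (h : ∀ x, ∫⁻ y, D (x, y) ∂ν = 1) : ((μ.prod ν).withDensity D).map Prod.fst = μ := by
  ext s hs
  rw [Measure.map_apply measurable_fst hs, withDensity_apply _ (measurable_fst hs),
    ← Set.prod_univ, ← Measure.restrict_prod_eq_prod_univ, lintegral_prod _ hD.aemeasurable]
  simp [h]

lemma map_snd_withDensity_prod [SFinite μ] [SFinite ν] (hD : Measurable D)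
    (h : ∀ y, ∫⁻ x, D (x, y) ∂μ = 1) : ((μ.prod ν).withDensity D).map Prod.snd = ν := by
  ext s hs
  rw [Measure.map_apply measurable_snd hs, withDensity_apply _ (measurable_snd hs),
    ← Set.univ_prod, ← Measure.restrict_univ (μ := μ), ← Measure.prod_restrict,
    Measure.restrict_univ, lintegral_prod_symm _ hD.aemeasurable]
  simp [h]

end Marginals

section Channel

variable {α Z : Type*} [MeasurableSpace α] [Fintype Z]

structure IsPositiveStochastic (p : α → Z → ℝ) : Prop where
  pos : ∀ θ z, 0 < p θ z
  sum_eq_one : ∀ θ, ∑ z, p θ z = 1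
  measurable : ∀ z, Measurable fun θ => p θ z

def mixture (W : Measure α) (p : α → Z → ℝ) (z : Z) : ℝ := ∫ θ, p θ z ∂W

def jointDensity (W : Measure α) (p : α → Z → ℝ) (θ θ' : α) : ℝ :=
  ∑ z, p θ z * p θ' z / mixture W p z

lemma jointDensity_comm (W : Measure α) (p : α → Z → ℝ) (θ θ' : α) :
    jointDensity W p θ θ' = jointDensity W p θ' θ := by
  simp only [jointDensity, mul_comm (p θ _)]

namespace IsPositiveStochastic

variable {W : Measure α} {p : α → Z → ℝ}

lemma norm_le_one (hp : IsPositiveStochastic p) (θ : α) (z : Z) : ‖p θ z‖ ≤ 1 := by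
  rw [Real.norm_of_nonneg (hp.pos θ z).le, ← hp.sum_eq_one θ]
  exact Finset.single_le_sum (fun z _ => (hp.pos θ z).le) (Finset.mem_univ z)

lemma measurable_jointDensity (hp : IsPositiveStochastic p) :
    Measurable fun q : α × α => jointDensity W p q.1 q.2 :=
  Finset.measurable_sum _ fun z _ =>
    (((hp.measurable z).comp measurable_fst).mul
      ((hp.measurable z).comp measurable_snd)).div_const _

lemma integrable_sub_mul (hp : IsPositiveStochastic p) {g : α → ℝ} (hg : Integrable g W) (z : Z)
    (c : ℝ) : Integrable (fun θ => (p θ z - c) * g θ) W :=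
  hg.bdd_mul (c := 1 + ‖c‖) ((hp.measurable z).sub measurable_const).aestronglyMeasurable
    (ae_of_all _ fun θ => (norm_sub_le _ _).trans (add_le_add_left (hp.norm_le_one θ z) _))

variable [IsProbabilityMeasure W]

lemma integrable (hp : IsPositiveStochastic p) (z : Z) : Integrable (fun θ => p θ z) W :=
  .of_bound (hp.measurable z).aestronglyMeasurable 1 (ae_of_all _ fun θ => hp.norm_le_one θ z)

lemma mixture_pos (hp : IsPositiveStochastic p) (z : Z) : 0 < mixture W p z := by
  refine (integral_pos_iff_support_of_nonneg (fun θ => (hp.pos θ z).le) (hp.integrable z)).2 ?_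
  rw [Function.support_eq_univ fun θ => (hp.pos θ z).ne', measure_univ]
  exact one_pos

lemma sum_mixture (hp : IsPositiveStochastic p) : ∑ z, mixture W p z = 1 := by
  simp only [mixture]
  rw [← integral_finsetSum _ fun z _ => hp.integrable z]
  simp [hp.sum_eq_one]

lemma jointDensity_nonneg (hp : IsPositiveStochastic p) (θ θ' : α) :
    0 ≤ jointDensity W p θ θ' :=
  Finset.sum_nonneg fun z _ =>
    div_nonneg (mul_nonneg (hp.pos θ z).le (hp.pos θ' z).le) (hp.mixture_pos z).le

lemma integrable_jointDensity_right (hp : IsPositiveStochastic p) (θ : α) :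
    Integrable (jointDensity W p θ) W := by
  refine .of_bound (hp.measurable_jointDensity.comp measurable_prodMk_left).aestronglyMeasurable
    (∑ z, (mixture W p z)⁻¹) (ae_of_all _ fun θ' => ?_)
  rw [Real.norm_of_nonneg (hp.jointDensity_nonneg θ θ')]
  refine Finset.sum_le_sum fun z _ => ?_
  rw [div_eq_mul_inv]
  exact mul_le_of_le_one_left (inv_nonneg.2 (hp.mixture_pos z).le)
    (mul_le_one₀ ((Real.le_norm_self _).trans (hp.norm_le_one θ z)) (hp.pos θ' z).le
      ((Real.le_norm_self _).trans (hp.norm_le_one θ' z)))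

lemma integral_jointDensity_right (hp : IsPositiveStochastic p) (θ : α) :
    ∫ θ', jointDensity W p θ θ' ∂W = 1 := by
  simp only [jointDensity]
  rw [integral_finsetSum _ fun z _ => ((hp.integrable z).const_mul (p θ z)).div_const _]
  simp only [integral_div, integral_const_mul]
  rw [← hp.sum_eq_one θ]
  exact Finset.sum_congr rfl fun z _ => mul_div_cancel_right₀ _ (hp.mixture_pos z).ne'

lemma jointDensity_sub_one (hp : IsPositiveStochastic p) (θ θ' : α) :
    jointDensity W p θ θ' - 1 =
      ∑ z, (p θ z - mixture W p z) * (p θ' z - mixture W p z) / mixture W p z := by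
  have expand : ∀ z, (p θ z - mixture W p z) * (p θ' z - mixture W p z) / mixture W p z
      = p θ z * p θ' z / mixture W p z - p θ z - p θ' z + mixture W p z := fun z => by
    field_simp [(hp.mixture_pos z).ne']
    ring
  simp only [expand, Finset.sum_add_distrib, Finset.sum_sub_distrib, hp.sum_eq_one,
    hp.sum_mixture, jointDensity]
  ring

lemma integral_jointDensity_sub_one_mul (hp : IsPositiveStochastic p) {g : α → ℝ}
    (hg : Integrable g W) (θ : α) :
    ∫ θ', (jointDensity W p θ θ' - 1) * g θ' ∂W =
      ∑ z, (p θ z - mixture W p z) / mixture W p z *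
        ∫ θ', (p θ' z - mixture W p z) * g θ' ∂W := by
  have expand : (fun θ' => (jointDensity W p θ θ' - 1) * g θ') = fun θ' =>
      ∑ z, (p θ z - mixture W p z) / mixture W p z * ((p θ' z - mixture W p z) * g θ') := by
    ext θ'
    rw [hp.jointDensity_sub_one, Finset.sum_mul]
    exact Finset.sum_congr rfl fun z _ => by ring
  rw [expand, integral_finsetSum _ fun z _ => (hp.integrable_sub_mul hg z _).const_mul _]
  simp_rw [integral_const_mul]

lemma integral_mul_integral_jointDensity_sub_one_mul (hp : IsPositiveStochastic p) {g : α → ℝ}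
    (hg : Integrable g W) :
    ∫ θ, g θ * ∫ θ', (jointDensity W p θ θ' - 1) * g θ' ∂W ∂W =
      ∑ z, (∫ θ, (p θ z - mixture W p z) * g θ ∂W) ^ 2 / mixture W p z := by
  have expand : (fun θ => g θ * ∫ θ', (jointDensity W p θ θ' - 1) * g θ' ∂W) = fun θ =>
      ∑ z, (∫ θ', (p θ' z - mixture W p z) * g θ' ∂W) / mixture W p z *
        ((p θ z - mixture W p z) * g θ) := by
    ext θ
    rw [hp.integral_jointDensity_sub_one_mul hg, Finset.mul_sum]
    exact Finset.sum_congr rfl fun z _ => by ring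
  rw [expand, integral_finsetSum _ fun z _ => (hp.integrable_sub_mul hg z _).const_mul _]
  simp_rw [integral_const_mul]
  exact Finset.sum_congr rfl fun z _ => by ring

lemma ae_eq_mixture_of_jointDensity_ae_eq_one (hp : IsPositiveStochastic p)
    (h : ∀ᵐ q ∂W.prod W, jointDensity W p q.1 q.2 = 1) (z : Z) :
    (fun θ => p θ z) =ᵐ[W] fun _ => mixture W p z := by
  set u := fun θ => p θ z - mixture W p z
  have hu : Integrable u W := (hp.integrable z).sub (integrable_const _)
  have hform : ∫ θ, u θ * ∫ θ', (jointDensity W p θ θ' - 1) * u θ' ∂W ∂W = 0 := by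
    refine integral_eq_zero_of_ae ?_
    filter_upwards [Measure.ae_ae_of_ae_prod h] with θ hθ
    rw [integral_eq_zero_of_ae (by filter_upwards [hθ] with θ' h'; simp [h']), mul_zero]
    rfl
  rw [hp.integral_mul_integral_jointDensity_sub_one_mul hu, Finset.sum_eq_zero_iff_of_nonneg
    fun z _ => div_nonneg (sq_nonneg _) (hp.mixture_pos z).le] at hform
  have hsq : ∫ θ, u θ * u θ ∂W = 0 := by
    simpa [(hp.mixture_pos z).ne'] using hform z (Finset.mem_univ z)
  rw [integral_eq_zero_iff_of_nonneg (fun θ => mul_self_nonneg (u θ))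
    (hp.integrable_sub_mul hu z _)] at hsq
  filter_upwards [hsq] with θ hθ
  exact sub_eq_zero.1 (mul_self_eq_zero.1 hθ)

lemma lintegral_ofReal_jointDensity_right (hp : IsPositiveStochastic p) (θ : α) :
    ∫⁻ θ', ENNReal.ofReal (jointDensity W p θ θ') ∂W = 1 := by
  rw [← ofReal_integral_eq_lintegral_ofReal (hp.integrable_jointDensity_right θ)
    (ae_of_all _ (hp.jointDensity_nonneg θ)), hp.integral_jointDensity_right, ENNReal.ofReal_one]

lemma map_fst_withDensity_jointDensity (hp : IsPositiveStochastic p) :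
    ((W.prod W).withDensity fun q => ENNReal.ofReal (jointDensity W p q.1 q.2)).map Prod.fst = W :=
  map_fst_withDensity_prod hp.measurable_jointDensity.ennreal_ofReal
    hp.lintegral_ofReal_jointDensity_right

lemma map_snd_withDensity_jointDensity (hp : IsPositiveStochastic p) :
    ((W.prod W).withDensity fun q => ENNReal.ofReal (jointDensity W p q.1 q.2)).map Prod.snd = W :=
  map_snd_withDensity_prod hp.measurable_jointDensity.ennreal_ofReal fun θ' => by
    simpa only [jointDensity_comm W p _ θ'] using hp.lintegral_ofReal_jointDensity_right θ'

lemma withDensity_jointDensity_eq_prod_iff (hp : IsPositiveStochastic p) :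
    (W.prod W).withDensity (fun q => ENNReal.ofReal (jointDensity W p q.1 q.2)) = W.prod W ↔
      ∀ᵐ q ∂W.prod W, jointDensity W p q.1 q.2 = 1 := by
  conv_lhs => rhs; rw [← withDensity_one (μ := W.prod W)]
  rw [withDensity_eq_iff_of_sigmaFinite (g := 1)
    hp.measurable_jointDensity.ennreal_ofReal.aemeasurable aemeasurable_one]
  simp only [EventuallyEq, Pi.one_apply, ENNReal.ofReal_eq_one]

end IsPositiveStochastic

lemma jointDensity_eq_one_of_unique [Unique Z] {W : Measure α} [IsProbabilityMeasure W]
    {p : α → Z → ℝ} (hsum : ∀ θ, ∑ z, p θ z = 1) (θ θ' : α) : jointDensity W p θ θ' = 1 := by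
  have hone : ∀ θ z, p θ z = 1 := fun θ z => by
    simpa [Unique.eq_default z] using hsum θ
  simp [jointDensity, mixture, hone]

end Channel



namespace CorrModel

variable {d : ℕ} {𝒳 : Type} [Fintype 𝒳] (M : CorrModel d 𝒳)

instance : IsProbabilityMeasure M.wMeasure :=
  ⟨by rw [wMeasure, withDensity_apply _ MeasurableSet.univ, Measure.restrict_univ,
    ← ofReal_integral_eq_lintegral_ofReal M.hwint (ae_of_all _ M.hw0), M.hw1, ENNReal.ofReal_one]⟩

lemma isPositiveStochastic (t : ℕ) : IsPositiveStochastic (M.μ t) :=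
  ⟨M.hμpos t, M.hμsum t, M.hμmeas t⟩

lemma setIntegral_mul_w (g : EuclideanSpace ℝ (Fin d) → ℝ) :
    ∫ θ in M.Θ, g θ * M.w θ = ∫ θ, g θ ∂M.wMeasure := by
  rw [wMeasure, integral_withDensity_eq_integral_toReal_smul M.hwmeas.ennreal_ofReal
    (ae_of_all _ fun _ => ENNReal.ofReal_lt_top)]
  simp only [ENNReal.toReal_ofReal (M.hw0 _), smul_eq_mul, mul_comm]

lemma f_eq_jointDensity (t : ℕ) : M.f t = jointDensity M.wMeasure (M.μ t) := by
  ext θ θ'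
  simp only [f, jointDensity, mixture, setIntegral_mul_w]

lemma jointMeasure_eq_withDensity (t : ℕ) :
    M.jointMeasure t = (M.wMeasure.prod M.wMeasure).withDensity
      fun q => ENNReal.ofReal (jointDensity M.wMeasure (M.μ t) q.1 q.2) := by
  have hw := M.hwmeas.ennreal_ofReal
  have hww : Measurable fun q : EuclideanSpace ℝ (Fin d) × EuclideanSpace ℝ (Fin d) =>
      ENNReal.ofReal (M.w q.1) * ENNReal.ofReal (M.w q.2) :=
    (hw.comp measurable_fst).mul (hw.comp measurable_snd)
  have hprod : M.wMeasure.prod M.wMeasure =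
      ((volume.restrict M.Θ).prod (volume.restrict M.Θ)).withDensity fun q =>
        ENNReal.ofReal (M.w q.1) * ENNReal.ofReal (M.w q.2) :=
    prod_withDensity hw hw
  rw [hprod, ← withDensity_mul _ hww
    (M.isPositiveStochastic t).measurable_jointDensity.ennreal_ofReal, jointMeasure,
    ← f_eq_jointDensity]
  congr 1 with q
  simp only [Pi.mul_apply, ← ENNReal.ofReal_mul (M.hw0 _),
    ← ENNReal.ofReal_mul (mul_nonneg (M.hw0 _) (M.hw0 _))]

lemma f_zero (θ θ' : EuclideanSpace ℝ (Fin d)) : M.f 0 θ θ' = 1 := by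
  rw [f_eq_jointDensity, jointDensity_eq_one_of_unique (M.hμsum 0)]

end CorrModel

theorem stmt_3_general {d : ℕ} {𝒳 : Type} [Fintype 𝒳]
    (M : CorrModel d 𝒳)
    (hnc : ∀ t : ℕ, 1 ≤ t → ∃ z : Fin t → 𝒳,
      ¬ ∃ cst : ℝ, (fun θ => M.μ t θ z) =ᵐ[M.wMeasure] fun _ => cst) :
    (∀ t : ℕ,
      (M.jointMeasure t
          = ((M.jointMeasure t).map Prod.fst).prod ((M.jointMeasure t).map Prod.snd)
        ↔ t = 0)) ∧
    (∀ θ θ', M.f 0 θ θ' = 1) ∧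
    (∀ θ θ', M.w θ * M.w θ' * M.f 0 θ θ' = M.w θ * M.w θ') := by
  refine ⟨fun t => ?_, M.f_zero, fun θ θ' => by rw [M.f_zero, mul_one]⟩
  have hp := M.isPositiveStochastic t
  rw [M.jointMeasure_eq_withDensity, hp.map_fst_withDensity_jointDensity,
    hp.map_snd_withDensity_jointDensity, hp.withDensity_jointDensity_eq_prod_iff]
  constructor
  · intro h
    by_contra ht
    obtain ⟨z, hz⟩ := hnc t (Nat.one_le_iff_ne_zero.2 ht)
    exact hz ⟨_, hp.ae_eq_mixture_of_jointDensity_ae_eq_one h z⟩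
  · rintro rfl
    exact ae_of_all _ fun q => jointDensity_eq_one_of_unique (M.hμsum 0) q.1 q.2

/-- Lemma 3 of the paper.
Assume in addition that for each `t ≥ 1` there exists `z^t ∈ 𝒳^t` such that
`θ ↦ μ^t_θ(z^t)` is not `w`-almost-everywhere equal to a constant. Then the parameters
`θ⁽¹⁾` and `θ⁽²⁾` are independent (their joint law is the product of their marginals) if
and only if `t = 0`; in particular `f⁰ ≡ 1` and `p⁰(θ, θ') = w(θ) w(θ')`. -/
theorem stmt_3 {d : ℕ} {𝒳 : Type} [Fintype 𝒳] (hd : 1 ≤ d) (h𝒳 : 2 ≤ Fintype.card 𝒳)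
    (M : CorrModel d 𝒳)
    (hnc : ∀ t : ℕ, 1 ≤ t → ∃ z : Fin t → 𝒳,
      ¬ ∃ cst : ℝ, (fun θ => M.μ t θ z) =ᵐ[M.wMeasure] fun _ => cst) :
    (∀ t : ℕ,
      (M.jointMeasure t
          = ((M.jointMeasure t).map Prod.fst).prod ((M.jointMeasure t).map Prod.snd)
        ↔ t = 0)) ∧
    (∀ θ θ', M.f 0 θ θ' = 1) ∧
    (∀ θ θ', M.w θ * M.w θ' * M.f 0 θ θ' = M.w θ * M.w θ') :=
  stmt_3_general M hnc
end
end

section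
/- Let (X, Y) be a pair of random variables on finite sets A and B. Let c : A × B → {0,1}* be an encoder whose set of realized codewords is prefix-free, and suppose there exists a decoder d : {0,1}* → A (not having access to Y) with d(c(x, y)) = x for every (x, y) with P(X = x, Y = y) > 0. Then E|c(X, Y)| ≥ H(X). Hence side information available only at the encoder provides no reduction in the minimum expected codeword length of strictly lossless compression. -/
open Finset Real

noncomputable section

/-- A set of binary strings is prefix-free if no element is a proper prefix of another. -/
def PrefixFree (C : Set (List Bool)) : Prop :=
  ∀ u ∈ C, ∀ v ∈ C, u <+: v → u = v

/-! Keep, for each source symbol `a`, its shortest realized codeword `c (a, b_a)`. The decoder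
recovers `a` from it, so these codewords are distinct and form a prefix-free code for `X` alone;
Kraft's inequality and Gibbs' inequality then give
`H(X) ≤ ∑ₐ P(X = a) |c (a, b_a)| ≤ E|c(X, Y)|`. Kraft's inequality for prefix-free codes follows
from the Kraft–McMillan inequality, since a prefix-free code without the empty word is uniquely
decodable. -/

namespace InformationTheory

variable {α : Type*}

theorem uniquelyDecodable_of_prefixFree {S : Set (List α)}
    (hpf : ∀ u ∈ S, ∀ v ∈ S, u <+: v → u = v) (hnil : [] ∉ S) : UniquelyDecodable S := by
  intro L₁
  induction L₁ with
  | nil =>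
    rintro (_ | ⟨v, L₂⟩) - h₂ h
    · rfl
    · simp only [List.flatten_nil, List.flatten_cons, List.nil_eq, List.append_eq_nil_iff] at h
      exact absurd (h.1 ▸ h₂ v (by simp)) hnil
  | cons u L₁ ih =>
    rintro (_ | ⟨v, L₂⟩) h₁ h₂ h
    · simp only [List.flatten_nil, List.flatten_cons, List.append_eq_nil_iff] at h
      exact absurd (h.1 ▸ h₁ u (by simp)) hnil
    · simp only [List.flatten_cons] at h
      have hu := h₁ u (by simp)
      have hv := h₂ v (by simp)
      obtain rfl : u = v := by
        rcases List.prefix_or_prefix_of_prefix (List.prefix_append u _) (h ▸ List.prefix_append v _)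
          with huv | hvu
        · exact hpf u hu v hv huv
        · exact (hpf v hv u hu hvu).symm
      rw [ih L₂ (fun w hw => h₁ w (by simp [hw])) (fun w hw => h₂ w (by simp [hw]))
        (List.append_cancel_left h)]

theorem kraft_inequality_of_prefixFree [Fintype α] [Nonempty α] {S : Finset (List α)}
    (hpf : ∀ u ∈ S, ∀ v ∈ S, u <+: v → u = v) :
    ∑ w ∈ S, (1 / Fintype.card α : ℝ) ^ w.length ≤ 1 := by
  by_cases hnil : [] ∈ S
  · -- `[]` is a prefix of every word
    obtain rfl : S = {[]} := Finset.eq_singleton_iff_unique_mem.2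
      ⟨hnil, fun v hv => (hpf [] hnil v hv List.nil_prefix).symm⟩
    simp
  · exact kraft_mcmillan_inequality (uniquelyDecodable_of_prefixFree hpf hnil)

end InformationTheory

theorem mul_logb_sub_mul_logb_le {b q r : ℝ} (hb : 1 < b) (hq : 0 < q) (hr : 0 < r) :
    q * logb b r - q * logb b q ≤ (r - q) / log b := by
  have hlog : log r - log q ≤ r / q - 1 := by
    rw [← log_div hr.ne' hq.ne']; exact log_le_sub_one_of_pos (div_pos hr hq)
  calc q * logb b r - q * logb b q = q * (log r - log q) / log b := by
        rw [logb, logb]; ring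
    _ ≤ q * (r / q - 1) / log b := by gcongr; exact (log_pos hb).le
    _ = (r - q) / log b := by field_simp

theorem H2_le_sum_neg_mul_logb {S : Type*} [Fintype S] {q r : S → ℝ} (hq0 : ∀ s, 0 ≤ q s)
    (hq1 : ∑ s, q s = 1) (hr0 : ∀ s, 0 < q s → 0 < r s) (hr1 : ∑ s with 0 < q s, r s ≤ 1) :
    H2 q ≤ ∑ s, -(q s * logb 2 (r s)) := by
  have sum_support : ∀ f : S → ℝ, (∀ s, q s = 0 → f s = 0) →
      ∑ s with 0 < q s, f s = ∑ s, f s :=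
    fun f hf => Finset.sum_subset (Finset.subset_univ _) fun s _ hs =>
      hf s (le_antisymm (not_lt.1 (by simpa using hs)) (hq0 s))
  calc H2 q = ∑ s with 0 < q s, -(q s * logb 2 (q s)) :=
        (sum_support _ fun s hs => by simp [hs]).symm
    _ ≤ ∑ s with 0 < q s, (-(q s * logb 2 (r s)) + (r s - q s) / log 2) := by
        refine Finset.sum_le_sum fun s hs => ?_
        have hs : 0 < q s := (Finset.mem_filter.1 hs).2
        linarith [mul_logb_sub_mul_logb_le one_lt_two hs (hr0 s hs)]
    _ = ∑ s with 0 < q s, -(q s * logb 2 (r s)) +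
          (∑ s with 0 < q s, r s - ∑ s with 0 < q s, q s) / log 2 := by
        rw [Finset.sum_add_distrib, ← Finset.sum_div, Finset.sum_sub_distrib]
    _ ≤ ∑ s, -(q s * logb 2 (r s)) := by
        rw [sum_support _ fun s hs => by simp [hs], sum_support q fun _ h => h, hq1]
        have : (∑ s with 0 < q s, r s - 1) / log 2 ≤ 0 :=
          div_nonpos_of_nonpos_of_nonneg (by linarith) (log_pos one_lt_two).le
        linarith

theorem H2_le_sum_mul_length {S : Type*} [Fintype S] {q : S → ℝ} (hq0 : ∀ s, 0 ≤ q s)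
    (hq1 : ∑ s, q s = 1) (ℓ : S → ℕ) (hkraft : ∑ s with 0 < q s, (1 / 2 : ℝ) ^ ℓ s ≤ 1) :
    H2 q ≤ ∑ s, q s * ℓ s := by
  convert H2_le_sum_neg_mul_logb hq0 hq1 (fun s _ => by positivity) hkraft using 2 with s
  simp [logb_pow]

theorem sum_marginal_mul_le_sum_mul {A B : Type*} [Fintype A] [Fintype B] {p : A × B → ℝ}
    (hp0 : ∀ ab, 0 ≤ p ab) {g : A → ℝ} {f : A × B → ℝ} (hgf : ∀ ab, 0 < p ab → g ab.1 ≤ f ab) :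
    ∑ a, (∑ b, p (a, b)) * g a ≤ ∑ ab, p ab * f ab := by
  simp_rw [Finset.sum_mul, Fintype.sum_prod_type]
  refine Finset.sum_le_sum fun a _ => Finset.sum_le_sum fun b _ => ?_
  rcases (hp0 (a, b)).eq_or_lt with h | h
  · simp [← h]
  · exact mul_le_mul_of_nonneg_left (hgf (a, b) h) h.le

theorem exists_kraft_lengths_of_decoder {A B : Type*} [Fintype A] [Fintype B]
    {p : A × B → ℝ} (hp0 : ∀ ab, 0 ≤ p ab) {c : A × B → List Bool}
    (hpf : PrefixFree (Set.range c)) {dec : List Bool → A}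
    (hdec : ∀ ab : A × B, 0 < p ab → dec (c ab) = ab.1) :
    ∃ ℓ : A → ℕ, ∑ a with 0 < ∑ b, p (a, b), (1 / 2 : ℝ) ^ ℓ a ≤ 1 ∧
      ∀ ab, 0 < p ab → ℓ ab.1 ≤ (c ab).length := by
  classical
  rcases isEmpty_or_nonempty B with hB | hB
  · exact ⟨0, by simp, fun ab => isEmptyElim ab.2⟩
  have shortest : ∀ a, 0 < ∑ b, p (a, b) → ∃ b, 0 < p (a, b) ∧
      ∀ b', 0 < p (a, b') → (c (a, b)).length ≤ (c (a, b')).length := by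
    intro a ha
    obtain ⟨b₀, hb₀⟩ : ∃ b, 0 < p (a, b) := by
      by_contra! h
      exact ha.not_ge (Finset.sum_nonpos fun b _ => h b)
    obtain ⟨b, hb, hmin⟩ := (univ.filter fun b => 0 < p (a, b)).exists_min_image
      (fun b => (c (a, b)).length) ⟨b₀, by simpa using hb₀⟩
    exact ⟨b, (Finset.mem_filter.1 hb).2, fun b' hb' => hmin b' (by simpa using hb')⟩
  choose! b hb hmin using shortest
  refine ⟨fun a => (c (a, b a)).length, ?_, fun ⟨a, b'⟩ hab => hmin a ?_ b' hab⟩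
  · have hinj : Set.InjOn (fun a => c (a, b a)) {a | 0 < ∑ b, p (a, b)} := fun a ha a' ha' h =>
      (hdec _ (hb a ha)).symm.trans ((congrArg dec h).trans (hdec _ (hb a' ha')))
    rw [← Finset.sum_image (f := fun w => (1 / 2 : ℝ) ^ w.length)
      fun a ha a' ha' => hinj (by simpa using ha) (by simpa using ha')]
    simpa using InformationTheory.kraft_inequality_of_prefixFree (α := Bool) fun u hu v hv =>
      hpf u (by aesop) v (by aesop)
  · exact hab.trans_le (Finset.single_le_sum (fun b _ => hp0 (a, b)) (Finset.mem_univ b'))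

/-- the `UcompE` result of the paper: encoder-only side information
does not help strictly lossless compression.
Let `(X, Y)` be a pair of random variables on finite sets `A` and `B` with joint mass
function `p`.  Let `c : A × B → {0,1}*` be an encoder whose set of realized codewords is
prefix-free, and suppose there exists a decoder `d : {0,1}* → A` (not having access to
`Y`) with `d(c(x, y)) = x` for every `(x, y)` with `P(X = x, Y = y) > 0`.  Then
`E|c(X, Y)| ≥ H(X)`. -/
theorem stmt_10 {A B : Type} [Fintype A] [Fintype B]
    (p : A × B → ℝ) (hp0 : ∀ ab, 0 ≤ p ab) (hp1 : ∑ ab, p ab = 1)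
    (c : A × B → List Bool) (hpf : PrefixFree (Set.range c))
    (dec : List Bool → A) (hdec : ∀ ab : A × B, 0 < p ab → dec (c ab) = ab.1) :
    H2 (fun a => ∑ b, p (a, b)) ≤ ∑ ab, p ab * ((c ab).length : ℝ) := by
  obtain ⟨ℓ, hkraft, hℓ⟩ := exists_kraft_lengths_of_decoder hp0 hpf hdec
  calc H2 (fun a => ∑ b, p (a, b)) ≤ ∑ a, (∑ b, p (a, b)) * ℓ a :=
        H2_le_sum_mul_length (fun a => Finset.sum_nonneg fun b _ => hp0 (a, b))
          (by rw [← Fintype.sum_prod_type, hp1]) ℓ hkraft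
    _ ≤ ∑ ab, p ab * ((c ab).length : ℝ) :=
        sum_marginal_mul_le_sum_mul hp0 fun ab hab => by exact_mod_cast hℓ ab hab
end
end
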